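/- Let c ≥ 8, let G be a finite connected simple graph with minimum degree at least c, and let ρ be a rotation system on G whose dual graph is simple and which has a cutface of length at least 15. Then the genus of (G,ρ) is at least ⌈(c−2)(c−3)/12⌉ + 2. -/

import Mathlib

namespace DualSep

open SimpleGraph

variable {V : Type*} [Fintype V] [DecidableEq V]

/-- The dart-reversal permutation of a simple graph. -/
def dartRev (G : SimpleGraph V) : Equiv.Perm G.Dart :=
  Function.Involutive.toPerm SimpleGraph.Dart.symm SimpleGraph.Dart.symm_involutive

/-- `ρ` is a rotation system on `G`: it permutes the darts, preserves the initial vertex of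
each dart, and the darts leaving any fixed vertex form a single orbit. -/
structure IsRotationSystem (G : SimpleGraph V) (ρ : Equiv.Perm G.Dart) : Prop where
  fst_fixed : ∀ d : G.Dart, (ρ d).fst = d.fst
  single_orbit : ∀ d d' : G.Dart, d.fst = d'.fst → ∃ n : ℕ, (ρ ^ n) d = d'

/-- The face permutation `φ = ρ ∘ rev` of a rotation system. -/
def facePerm {G : SimpleGraph V} (ρ : Equiv.Perm G.Dart) : Equiv.Perm G.Dart :=
  ρ * dartRev G

/-- The face (orbit of the face permutation) containing a given dart. -/
def faceOf {G : SimpleGraph V} (ρ : Equiv.Perm G.Dart) (d : G.Dart) : Set G.Dart :=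
  {d' | (facePerm ρ).SameCycle d d'}

/-- The set of faces of `(G, ρ)`. -/
def faces {G : SimpleGraph V} (ρ : Equiv.Perm G.Dart) : Set (Set G.Dart) :=
  Set.range (faceOf ρ)

/-- The dual graph is simple: no dual edge joins a face to itself, and no two distinct
faces are joined by more than one dual edge. -/
def DualSimple {G : SimpleGraph V} (ρ : Equiv.Perm G.Dart) : Prop :=
  (∀ d : G.Dart, faceOf ρ d ≠ faceOf ρ d.symm) ∧
  (∀ d d' : G.Dart, d.edge ≠ d'.edge →
    ¬(faceOf ρ d = faceOf ρ d' ∧ faceOf ρ d.symm = faceOf ρ d'.symm) ∧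
    ¬(faceOf ρ d = faceOf ρ d'.symm ∧ faceOf ρ d.symm = faceOf ρ d'))

/-- The dual graph of `(G, ρ)`, as a simple graph on the set of faces: two distinct faces
are adjacent when some edge of `G` induces a dual edge between them. -/
def dualGraph {G : SimpleGraph V} (ρ : Equiv.Perm G.Dart) : SimpleGraph (faces ρ) where
  Adj F₁ F₂ := F₁ ≠ F₂ ∧
    ∃ d : G.Dart, faceOf ρ d = (F₁ : Set G.Dart) ∧ faceOf ρ d.symm = (F₂ : Set G.Dart)
  symm := ⟨by
    rintro F₁ F₂ ⟨hne, d, h1, h2⟩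
    exact ⟨hne.symm, d.symm, h2, by rwa [SimpleGraph.Dart.symm_symm]⟩⟩
  loopless := ⟨by rintro F ⟨hne, -⟩; exact hne rfl⟩

/-- `C` is a cutface: a face whose removal disconnects the dual graph. -/
def IsCutface {G : SimpleGraph V} (ρ : Equiv.Perm G.Dart) (C : Set G.Dart) : Prop :=
  C ∈ faces ρ ∧
    ¬((dualGraph ρ).induce {F : faces ρ | (F : Set G.Dart) ≠ C}).Connected

end DualSep

/-!
Every face has length at least 3: the face permutation sends a dart to one starting at its
head, so a face of length 2 would be `{d, rev d}`, and the edge of `d` would be a dual loop.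
Counting darts face by face, one face of length at least 15 then gives `2|E| ≥ 3|F| + 12`,
while the minimum degree gives `2|E| ≥ c|V|` and `|V| ≥ c + 1`. Substituting into Euler's
formula, `2g ≥ 6 + |E|/3 - |V| ≥ 6 + (c - 6)|V|/6 ≥ 6 + (c - 6)(c + 1)/6`, that is,
`12 g ≥ (c - 2)(c - 3) + 24`.
-/

namespace DualSep

open SimpleGraph Finset

variable {V : Type*} {G : SimpleGraph V} {ρ : Equiv.Perm G.Dart}

theorem IsRotationSystem.facePerm_apply_fst (hρ : IsRotationSystem G ρ) (d : G.Dart) :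
    (facePerm ρ d).fst = d.snd :=
  hρ.fst_fixed d.symm

theorem faceOf_eq_faceOf_iff {d d' : G.Dart} :
    faceOf ρ d = faceOf ρ d' ↔ (facePerm ρ).SameCycle d d' := by
  constructor
  · intro h
    have hd' : d' ∈ faceOf ρ d' := Equiv.Perm.SameCycle.refl _ _
    rwa [← h] at hd'
  · intro h
    ext e
    exact ⟨h.symm.trans, h.trans⟩

theorem IsRotationSystem.two_lt_ncard_faceOf [Finite V] (hρ : IsRotationSystem G ρ)
    {d : G.Dart} (hloop : faceOf ρ d ≠ faceOf ρ d.symm) : 2 < (faceOf ρ d).ncard := by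
  have : Finite G.Dart := Finite.of_injective _ Dart.toProd_injective
  have hmoves : ∀ e, facePerm ρ e ≠ e := fun e h =>
    e.snd_ne_fst (by rw [← hρ.facePerm_apply_fst e, h])
  have hnot_two : facePerm ρ (facePerm ρ d) ≠ d := by
    intro h
    have hsymm : facePerm ρ d = d.symm := by
      have hsnd := hρ.facePerm_apply_fst (facePerm ρ d)
      rw [h] at hsnd
      ext
      exacts [hρ.facePerm_apply_fst d, hsnd.symm]
    exact hloop (faceOf_eq_faceOf_iff.mpr ⟨1, by rw [zpow_one, hsymm]⟩)
  exact (Set.two_lt_ncard (Set.toFinite _)).mpr ⟨d, ⟨0, rfl⟩,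
    _, ⟨1, zpow_one (facePerm ρ) ▸ rfl⟩, _, ⟨2, by rw [zpow_two, Equiv.Perm.mul_apply]⟩,
    (hmoves d).symm, hnot_two.symm, (hmoves _).symm⟩

open scoped Classical in
theorem card_dart_eq_sum_ncard_faces [Fintype V] [DecidableRel G.Adj] :
    Fintype.card G.Dart = ∑ F ∈ univ.image (faceOf ρ), F.ncard := by
  rw [← card_univ, card_eq_sum_card_image (faceOf ρ)]
  refine sum_congr rfl fun F hF => ?_
  obtain ⟨d, -, rfl⟩ := mem_image.mp hF
  rw [← Set.ncard_coe_finset]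
  congr 1
  ext e
  simp only [coe_filter, mem_univ, true_and, Set.mem_ofPred_eq, faceOf_eq_faceOf_iff]
  exact Equiv.Perm.sameCycle_comm

open scoped Classical in
theorem IsRotationSystem.ncard_add_three_mul_ncard_faces_le [Fintype V] [DecidableRel G.Adj]
    (hρ : IsRotationSystem G ρ) (hloop : ∀ d : G.Dart, faceOf ρ d ≠ faceOf ρ d.symm)
    {C : Set G.Dart} (hC : C ∈ faces ρ) :
    C.ncard + 3 * (faces ρ).ncard ≤ Fintype.card G.Dart + 3 := by
  set S := univ.image (faceOf ρ)
  have hCS : C ∈ S := by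
    obtain ⟨d, rfl⟩ := hC
    exact mem_image_of_mem _ (mem_univ d)
  have hS : (faces ρ).ncard = #S := by
    rw [← Set.ncard_coe_finset, coe_image, coe_univ, Set.image_univ, faces]
  have h3 : #(S.erase C) • 3 ≤ ∑ F ∈ S.erase C, F.ncard := by
    refine card_nsmul_le_sum _ _ _ fun F hF => ?_
    obtain ⟨d, -, rfl⟩ := mem_image.mp (mem_of_mem_erase hF)
    exact hρ.two_lt_ncard_faceOf (hloop d)
  rw [smul_eq_mul] at h3
  rw [card_dart_eq_sum_ncard_faces, ← add_sum_erase S _ hCS, hS, ← card_erase_add_one hCS]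
  omega

end DualSep

namespace SimpleGraph

open Finset

variable {V : Type*} [Fintype V] {G : SimpleGraph V} [DecidableRel G.Adj]

theorem mul_card_le_two_mul_card_edgeFinset {c : ℕ} (h : ∀ v, c ≤ G.degree v) :
    c * Fintype.card V ≤ 2 * #G.edgeFinset := by
  rw [← sum_degrees_eq_twice_card_edges, mul_comm, ← smul_eq_mul, ← card_univ]
  exact card_nsmul_le_sum _ _ _ fun v _ => h v

theorem add_one_le_card_of_le_degree {c : ℕ} (v : V) (h : c ≤ G.degree v) :
    c + 1 ≤ Fintype.card V :=
  h.trans_lt (G.degree_lt_card_verts v)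

end SimpleGraph

theorem genus_lower_bound_of_counts {n e f c : ℕ} {g : ℤ} (hc : 6 ≤ c) (hn : c + 1 ≤ n)
    (hdeg : c * n ≤ 2 * e) (hface : 12 + 3 * f ≤ 2 * e)
    (hEuler : (n : ℤ) - e + f = 2 - 2 * g) :
    ⌈((c : ℚ) - 2) * ((c : ℚ) - 3) / 12⌉ + 2 ≤ g := by
  rw [← le_sub_iff_add_le, Int.ceil_le, div_le_iff₀ (by norm_num)]
  have hc' : (6 : ℚ) ≤ c := by exact_mod_cast hc
  have hn' : (c : ℚ) + 1 ≤ n := by exact_mod_cast hn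
  have hdeg' : (c : ℚ) * n ≤ 2 * e := by exact_mod_cast hdeg
  have hface' : 12 + 3 * (f : ℚ) ≤ 2 * e := by exact_mod_cast hface
  have hEuler' : (n : ℚ) - e + f = 2 - 2 * g := by exact_mod_cast hEuler
  push_cast
  nlinarith [mul_nonneg (sub_nonneg.mpr hc') (sub_nonneg.mpr hn')]

open DualSep in
theorem stmt4_general {V : Type*} [Fintype V] (G : SimpleGraph V)
    (c : ℕ) (hc : 8 ≤ c)
    (hdeg : ∀ v : V, c ≤ (G.neighborSet v).ncard)
    (ρ : Equiv.Perm G.Dart) (hρ : IsRotationSystem G ρ) (hsimple : DualSimple ρ)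
    (C : Set G.Dart) (hC : IsCutface ρ C) (hClen : 15 ≤ C.ncard)
    (g : ℤ)
    (hEuler : (Fintype.card V : ℤ) - (G.edgeSet.ncard : ℤ) + ((faces ρ).ncard : ℤ)
      = 2 - 2 * g) :
    g ≥ ⌈(((c : ℚ) - 2) * ((c : ℚ) - 3)) / 12⌉ + 2 := by
  classical
  have hdegree : ∀ v, c ≤ G.degree v := fun v => by
    simpa [← G.card_neighborFinset_eq_degree, ← Set.ncard_coe_finset] using hdeg v
  have hfaces := hρ.ncard_add_three_mul_ncard_faces_le hsimple.1 hC.1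
  rw [G.dart_card_eq_twice_card_edges] at hfaces
  rw [← G.coe_edgeFinset, Set.ncard_coe_finset] at hEuler
  obtain ⟨d, -⟩ := hC.1
  exact genus_lower_bound_of_counts (by omega) (G.add_one_le_card_of_le_degree d.fst (hdegree _))
    (G.mul_card_le_two_mul_card_edgeFinset hdegree) (by omega) hEuler

open DualSep in
/-- If a connected graph of minimum degree at least `c ≥ 8` has an embedding with a simple
dual and a cutface of length at least 15, then its genus is at least
`⌈(c-2)(c-3)/12⌉ + 2`. -/
theorem stmt4 {V : Type*} [Fintype V] [DecidableEq V] (G : SimpleGraph V)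
    (hconn : G.Connected) (c : ℕ) (hc : 8 ≤ c)
    (hdeg : ∀ v : V, c ≤ (G.neighborSet v).ncard)
    (ρ : Equiv.Perm G.Dart) (hρ : IsRotationSystem G ρ) (hsimple : DualSimple ρ)
    (C : Set G.Dart) (hC : IsCutface ρ C) (hClen : 15 ≤ C.ncard)
    (g : ℤ)
    (hEuler : (Fintype.card V : ℤ) - (G.edgeSet.ncard : ℤ) + ((faces ρ).ncard : ℤ)
      = 2 - 2 * g) :
    g ≥ ⌈(((c : ℚ) - 2) * ((c : ℚ) - 3)) / 12⌉ + 2 :=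
  stmt4_general G c hc hdeg ρ hρ hsimple C hC hClen g hEuler
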